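/- Let n ≥ 1 and q ≥ 1, and for each i = 1,…,n let M_i be a q×q real symmetric positive semidefinite matrix and z_i, a_i, b_i ∈ ℝ^q. Set A = Σ_{i=1}^n (a_i−b_i)ᵀM_i(a_i−b_i) and E = Σ_{i=1}^n (z_i−b_i)ᵀM_i(z_i−b_i). Then (1/2)·Σ_{i=1}^n [ (z_i−b_i)ᵀM_i(z_i−b_i) − (z_i−a_i)ᵀM_i(z_i−a_i) ] ≤ (1/2)·A + √(A·E). -/

import Mathlib

/-!
With `dᵢ = aᵢ - bᵢ` and `uᵢ = zᵢ - bᵢ` we have `zᵢ - aᵢ = uᵢ - dᵢ`, so by symmetry of `Mᵢ` the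
summand is `2 dᵢᵀMᵢuᵢ - dᵢᵀMᵢdᵢ` and the left-hand side equals `S - A / 2` with
`S = Σᵢ dᵢᵀMᵢuᵢ`. The pairing `(v, w) ↦ Σᵢ vᵢᵀMᵢwᵢ` is a positive semidefinite symmetric bilinear
form, so Cauchy–Schwarz gives `S ≤ √(A E)`, and `A ≥ 0` finishes.
-/

open Matrix

namespace Matrix

section IsSymm

variable {n R : Type*} [Fintype n] [CommRing R] {M : Matrix n n R}

theorem IsSymm.dotProduct_mulVec_comm (hM : M.IsSymm) (x y : n → R) :
    x ⬝ᵥ M *ᵥ y = y ⬝ᵥ M *ᵥ x := by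
  simpa only [hM.eq] using (dotProduct_transpose_mulVec M y x).symm

theorem IsSymm.dotProduct_mulVec_sub_self (hM : M.IsSymm) (x y : n → R) :
    (x - y) ⬝ᵥ M *ᵥ (x - y) = x ⬝ᵥ M *ᵥ x - 2 * (y ⬝ᵥ M *ᵥ x) + y ⬝ᵥ M *ᵥ y := by
  simp only [mulVec_sub, dotProduct_sub, sub_dotProduct, hM.dotProduct_mulVec_comm x y]
  ring

theorem IsSymm.dotProduct_mulVec_add_smul_self (hM : M.IsSymm) (x y : n → R) (t : R) :
    (x + t • y) ⬝ᵥ M *ᵥ (x + t • y) =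
      y ⬝ᵥ M *ᵥ y * (t * t) + 2 * (x ⬝ᵥ M *ᵥ y) * t + x ⬝ᵥ M *ᵥ x := by
  simp only [mulVec_add, mulVec_smul, dotProduct_add, add_dotProduct, dotProduct_smul,
    smul_dotProduct, smul_eq_mul, hM.dotProduct_mulVec_comm y x]
  ring

end IsSymm

theorem PosSemidef.isSymm {n : Type*} {A : Matrix n n ℝ} (hA : A.PosSemidef) : A.IsSymm :=
  isHermitian_iff_isSymm.mp hA.isHermitian

theorem PosSemidef.dotProduct_mulVec_self_nonneg {n : Type*} [Fintype n] {A : Matrix n n ℝ}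
    (hA : A.PosSemidef) (x : n → ℝ) : 0 ≤ x ⬝ᵥ A *ᵥ x := by
  simpa only [star_trivial] using hA.dotProduct_mulVec_nonneg x

variable {ι n : Type*} [Fintype ι] [Fintype n] {M : ι → Matrix n n ℝ}

theorem sum_dotProduct_mulVec_sq_le (hM : ∀ i, (M i).PosSemidef) (x y : ι → n → ℝ) :
    (∑ i, x i ⬝ᵥ M i *ᵥ y i) ^ 2 ≤
      (∑ i, x i ⬝ᵥ M i *ᵥ x i) * ∑ i, y i ⬝ᵥ M i *ᵥ y i := by
  have hquad : ∀ t : ℝ, 0 ≤ (∑ i, y i ⬝ᵥ M i *ᵥ y i) * (t * t) +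
      2 * (∑ i, x i ⬝ᵥ M i *ᵥ y i) * t + ∑ i, x i ⬝ᵥ M i *ᵥ x i := fun t => by
    simpa only [fun i => (hM i).isSymm.dotProduct_mulVec_add_smul_self (x i) (y i) t,
      Finset.sum_add_distrib, Finset.sum_mul, Finset.mul_sum] using
      Finset.sum_nonneg fun i _ => (hM i).dotProduct_mulVec_self_nonneg (x i + t • y i)
  have hdisc := discrim_le_zero hquad
  rw [discrim] at hdisc
  linarith

end Matrix

theorem stmt7_general (n q : ℕ)
    (M : Fin n → Matrix (Fin q) (Fin q) ℝ) (hM : ∀ i, (M i).PosSemidef)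
    (z a b : Fin n → Fin q → ℝ) :
    (1 / 2 : ℝ) * ∑ i, ((z i - b i) ⬝ᵥ (M i).mulVec (z i - b i) -
        (z i - a i) ⬝ᵥ (M i).mulVec (z i - a i)) ≤
      (1 / 2 : ℝ) * (∑ i, (a i - b i) ⬝ᵥ (M i).mulVec (a i - b i)) +
        Real.sqrt ((∑ i, (a i - b i) ⬝ᵥ (M i).mulVec (a i - b i)) *
          (∑ i, (z i - b i) ⬝ᵥ (M i).mulVec (z i - b i))) := by
  have hdiff : ∑ i, ((z i - b i) ⬝ᵥ M i *ᵥ (z i - b i) - (z i - a i) ⬝ᵥ M i *ᵥ (z i - a i)) =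
      2 * ∑ i, (a i - b i) ⬝ᵥ M i *ᵥ (z i - b i) - ∑ i, (a i - b i) ⬝ᵥ M i *ᵥ (a i - b i) := by
    rw [Finset.mul_sum, ← Finset.sum_sub_distrib]
    refine Finset.sum_congr rfl fun i _ => ?_
    rw [show z i - a i = (z i - b i) - (a i - b i) by abel,
      (hM i).isSymm.dotProduct_mulVec_sub_self (z i - b i) (a i - b i)]
    ring
  have hA : 0 ≤ ∑ i, (a i - b i) ⬝ᵥ M i *ᵥ (a i - b i) :=
    Finset.sum_nonneg fun i _ => (hM i).dotProduct_mulVec_self_nonneg _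
  have hcross := Real.le_sqrt_of_sq_le
    (sum_dotProduct_mulVec_sq_le hM (fun i => a i - b i) (fun i => z i - b i))
  rw [hdiff]
  linarith

/-- **summed log-likelihood-ratio bound, equations (A.12)/(A.27).** For
symmetric PSD matrices `M i` and vectors `z i, a i, b i`, with
`A = Σᵢ (aᵢ-bᵢ)ᵀMᵢ(aᵢ-bᵢ)` and `E = Σᵢ (zᵢ-bᵢ)ᵀMᵢ(zᵢ-bᵢ)`,
`(1/2) Σᵢ [(zᵢ-bᵢ)ᵀMᵢ(zᵢ-bᵢ) - (zᵢ-aᵢ)ᵀMᵢ(zᵢ-aᵢ)] ≤ (1/2) A + √(A E)`. -/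
theorem stmt7 (n q : ℕ) (hn : 1 ≤ n) (hq : 1 ≤ q)
    (M : Fin n → Matrix (Fin q) (Fin q) ℝ) (hM : ∀ i, (M i).PosSemidef)
    (z a b : Fin n → Fin q → ℝ) :
    (1 / 2 : ℝ) * ∑ i, ((z i - b i) ⬝ᵥ (M i).mulVec (z i - b i) -
        (z i - a i) ⬝ᵥ (M i).mulVec (z i - a i)) ≤
      (1 / 2 : ℝ) * (∑ i, (a i - b i) ⬝ᵥ (M i).mulVec (a i - b i)) +
        Real.sqrt ((∑ i, (a i - b i) ⬝ᵥ (M i).mulVec (a i - b i)) *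
          (∑ i, (z i - b i) ⬝ᵥ (M i).mulVec (z i - b i))) :=
  stmt7_general n q M hM z a b
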